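/- arXiv:2507.00853 — 2 statements merged into one kernel-verified Lean document; each statement's English description precedes it below -/
import Mathlib

section
/- Let T > 0, b > 0, r > 0, λ > 0. Suppose η : [0,T] → ℝ and π : [0,T] → ℝ are differentiable and satisfy dη/dt = (b²/r)·η(t)² with η(T) = λ, and dπ/dt = (b²/r)·π(t)² + 2·(b²/r)·η(t)·π(t) with π(T) = −λ. Then π(t) = −η(t) for every t ∈ [0,T]. Equivalently, the sum s := η + π is differentiable, satisfies ds/dt = (b²/r)·s(t)² with s(T) = 0, and hence s ≡ 0 on [0,T]. -/
open Set

/-! The sum `s = η + p` solves the autonomous equation `s' = (b²/r) s²` with `s(T) = 0`, of which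
`0` is also a solution. The vector field `x ↦ (b²/r) x²` is locally Lipschitz, so it is Lipschitz
on the compact set of values taken by `s` on `[0,T]`, and backward uniqueness for Lipschitz ODEs
forces `s ≡ 0`. -/

theorem eqOn_Icc_of_hasDerivWithinAt_of_eq_right {E : Type*} [NormedAddCommGroup E]
    [NormedSpace ℝ E] {F : E → E} (hF : LocallyLipschitz F) {f g : ℝ → E} {a b : ℝ}
    (hf : ∀ t ∈ Icc a b, HasDerivWithinAt f (F (f t)) (Icc a b) t)
    (hg : ∀ t ∈ Icc a b, HasDerivWithinAt g (F (g t)) (Icc a b) t)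
    (hfg : f b = g b) :
    EqOn f g (Icc a b) := by
  have hf_cont : ContinuousOn f (Icc a b) := fun t ht => (hf t ht).continuousWithinAt
  have hg_cont : ContinuousOn g (Icc a b) := fun t ht => (hg t ht).continuousWithinAt
  set values := f '' Icc a b ∪ g '' Icc a b
  have hvalues : IsCompact values :=
    (isCompact_Icc.image_of_continuousOn hf_cont).union (isCompact_Icc.image_of_continuousOn hg_cont)
  obtain ⟨K, hK⟩ := hF.locallyLipschitzOn.exists_lipschitzOnWith_of_compact hvalues
  have hleft {h : ℝ → E} (hh : ∀ t ∈ Icc a b, HasDerivWithinAt h (F (h t)) (Icc a b) t) :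
      ∀ t ∈ Ioc a b, HasDerivWithinAt h (F (h t)) (Iic t) t := fun t ht =>
    (hh t (Ioc_subset_Icc_self ht)).mono_of_mem_nhdsWithin (Icc_mem_nhdsLE_of_mem ht)
  exact ODE_solution_unique_of_mem_Icc_left (v := fun _ => F) (s := fun _ => values)
    (fun _ _ => hK) hf_cont (hleft hf) (fun t ht => .inl ⟨t, Ioc_subset_Icc_self ht, rfl⟩)
    hg_cont (hleft hg) (fun t ht => .inr ⟨t, Ioc_subset_Icc_self ht, rfl⟩) hfg

theorem eq_zero_of_hasDerivWithinAt_mul_sq_of_eq_zero_right {s : ℝ → ℝ} {a b c : ℝ}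
    (hs : ∀ t ∈ Icc a b, HasDerivWithinAt s (c * s t ^ 2) (Icc a b) t) (hsb : s b = 0) :
    ∀ t ∈ Icc a b, s t = 0 := by
  have hF : LocallyLipschitz fun x : ℝ => c * x ^ 2 :=
    (ContDiff.locallyLipschitz (𝕂 := ℝ) (by fun_prop))
  refine eqOn_Icc_of_hasDerivWithinAt_of_eq_right hF hs (fun t _ => ?_) hsb
  simpa using hasDerivWithinAt_const t (Icc a b) (0 : ℝ)

theorem stmt_2_general (T b r lam : ℝ)
    (η p : ℝ → ℝ)
    (hη : ∀ t ∈ Icc (0:ℝ) T, HasDerivWithinAt η ((b ^ 2 / r) * (η t) ^ 2) (Icc (0:ℝ) T) t)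
    (hηT : η T = lam)
    (hp : ∀ t ∈ Icc (0:ℝ) T,
      HasDerivWithinAt p ((b ^ 2 / r) * (p t) ^ 2 + 2 * (b ^ 2 / r) * η t * p t)
        (Icc (0:ℝ) T) t)
    (hpT : p T = -lam) :
    (∀ t ∈ Icc (0:ℝ) T, p t = -η t) ∧
    (∀ t ∈ Icc (0:ℝ) T,
      HasDerivWithinAt (fun t => η t + p t) ((b ^ 2 / r) * (η t + p t) ^ 2) (Icc (0:ℝ) T) t) ∧
    η T + p T = 0 ∧
    (∀ t ∈ Icc (0:ℝ) T, η t + p t = 0) := by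
  have hsum : ∀ t ∈ Icc (0:ℝ) T,
      HasDerivWithinAt (fun t => η t + p t) ((b ^ 2 / r) * (η t + p t) ^ 2) (Icc (0:ℝ) T) t :=
    fun t ht => ((hη t ht).add (hp t ht)).congr_deriv (by ring)
  have hsumT : η T + p T = 0 := by rw [hηT, hpT, add_neg_cancel]
  have hzero := eq_zero_of_hasDerivWithinAt_mul_sq_of_eq_zero_right hsum hsumT
  exact ⟨fun t ht => eq_neg_of_add_eq_zero_right (hzero t ht), hsum, hsumT, hzero⟩

/-- if `η` solves `dη/dt = (b²/r)η²`, `η(T) = λ` and `p` solves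
`dp/dt = (b²/r)p² + 2(b²/r)ηp`, `p(T) = −λ` on `[0,T]`, then `p = −η` on `[0,T]`;
equivalently, the sum `s = η + p` satisfies `ds/dt = (b²/r)s²`, `s(T) = 0`,
and hence `s ≡ 0` on `[0,T]`. -/
theorem stmt_2 (T b r lam : ℝ) (hT : 0 < T) (hb : 0 < b) (hr : 0 < r) (hlam : 0 < lam)
    (η p : ℝ → ℝ)
    (hη : ∀ t ∈ Icc (0:ℝ) T, HasDerivWithinAt η ((b ^ 2 / r) * (η t) ^ 2) (Icc (0:ℝ) T) t)
    (hηT : η T = lam)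
    (hp : ∀ t ∈ Icc (0:ℝ) T,
      HasDerivWithinAt p ((b ^ 2 / r) * (p t) ^ 2 + 2 * (b ^ 2 / r) * η t * p t)
        (Icc (0:ℝ) T) t)
    (hpT : p T = -lam) :
    (∀ t ∈ Icc (0:ℝ) T, p t = -η t) ∧
    (∀ t ∈ Icc (0:ℝ) T,
      HasDerivWithinAt (fun t => η t + p t) ((b ^ 2 / r) * (η t + p t) ^ 2) (Icc (0:ℝ) T) t) ∧
    η T + p T = 0 ∧
    (∀ t ∈ Icc (0:ℝ) T, η t + p t = 0) :=
  stmt_2_general T b r lam η p hη hηT hp hpT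
end

section
/- Let T > 0, b > 0, r > 0, λ > 0, σ > 0, ν > 0, m₀ ∈ ℝ, 𝒳 ∈ ℝ, and let γ : [0,T] → ℝ be continuous. Then there exists a unique 5-tuple of differentiable functions (η, π, v, φ, q̄) on [0,T] satisfying simultaneously: dη/dt = (b²/r)·η², η(T) = λ; dπ/dt = (b²/r)·π² + 2·(b²/r)·η·π, π(T) = −λ; dv/dt = σ² − 2·(b²/r)·η·v, v(0) = ν² (and v(t) > 0 for all t so that the equations below are well defined); dφ/dt = −(σ²/2)·(𝒳/√v)·π, φ(T) = 0; and dq̄/dt = γ(t) − (b²/r)·φ + (σ²/2)·𝒳/√v, q̄(0) = m₀ + ν·𝒳. -/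
/-!
The system is triangular: each equation is a scalar ODE in one unknown whose coefficients involve
only the unknowns of the previous equations, so it is solved in order. The Riccati equation for `η`
has the explicit solution `η = λ / (1 + λ (b²/r) (T - t))`, `p = -η` solves the second equation,
the linear equation for `v` is solved explicitly (and `v > 0` because `ν ≠ 0`), and `φ`, `q` are
antiderivatives of continuous functions. For uniqueness, every right-hand side is Lipschitz in the
unknown on bounded sets, uniformly in `t`, while solutions are continuous on the compact `[0, T]`
and hence bounded, so the Grönwall uniqueness theorem applies equation by equation.
-/

open Set

/-- A tuple `(η, p, v, φ, q)` of differentiable functions solves the fully decoupled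
mean-field consistency FBODE system (fbode1)–(fbode5) on `[0,T]`:
`dη/dt = (b²/r)η²`, `η(T) = λ`;
`dp/dt = (b²/r)p² + 2(b²/r)ηp`, `p(T) = −λ`;
`dv/dt = σ² − 2(b²/r)ηv`, `v(0) = ν²` (with `v > 0` so that `1/√v` is well defined);
`dφ/dt = −(σ²/2)(𝒳/√v)p`, `φ(T) = 0`;
`dq/dt = γ(t) − (b²/r)φ + (σ²/2)𝒳/√v`, `q(0) = m₀ + ν·𝒳`. -/
def MFConsistencySol (T b r lam σ ν m₀ Xa : ℝ) (γ η p v φ q : ℝ → ℝ) : Prop :=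
  (∀ t ∈ Icc (0:ℝ) T,
    HasDerivWithinAt η ((b ^ 2 / r) * (η t) ^ 2) (Icc (0:ℝ) T) t) ∧
  η T = lam ∧
  (∀ t ∈ Icc (0:ℝ) T,
    HasDerivWithinAt p ((b ^ 2 / r) * (p t) ^ 2 + 2 * (b ^ 2 / r) * η t * p t)
      (Icc (0:ℝ) T) t) ∧
  p T = -lam ∧
  (∀ t ∈ Icc (0:ℝ) T,
    HasDerivWithinAt v (σ ^ 2 - 2 * (b ^ 2 / r) * η t * v t) (Icc (0:ℝ) T) t) ∧
  v 0 = ν ^ 2 ∧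
  (∀ t ∈ Icc (0:ℝ) T, 0 < v t) ∧
  (∀ t ∈ Icc (0:ℝ) T,
    HasDerivWithinAt φ (-(σ ^ 2 / 2) * (Xa / Real.sqrt (v t)) * p t) (Icc (0:ℝ) T) t) ∧
  φ T = 0 ∧
  (∀ t ∈ Icc (0:ℝ) T,
    HasDerivWithinAt q (γ t - (b ^ 2 / r) * φ t + (σ ^ 2 / 2) * Xa / Real.sqrt (v t))
      (Icc (0:ℝ) T) t) ∧
  q 0 = m₀ + ν * Xa

open Metric

lemma IsCompact.exists_mem_closedBall_of_continuousOn {α E : Type*} [TopologicalSpace α]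
    [SeminormedAddCommGroup E] {s : Set α} (hs : IsCompact s) {f g : α → E}
    (hf : ContinuousOn f s) (hg : ContinuousOn g s) :
    ∃ M, ∀ t ∈ s, f t ∈ closedBall 0 M ∧ g t ∈ closedBall 0 M := by
  obtain ⟨Cf, hCf⟩ := hs.exists_bound_of_continuousOn hf
  obtain ⟨Cg, hCg⟩ := hs.exists_bound_of_continuousOn hg
  refine ⟨max Cf Cg, fun t ht => ⟨?_, ?_⟩⟩ <;> rw [mem_closedBall_zero_iff]
  · exact (hCf t ht).trans (le_max_left _ _)
  · exact (hCg t ht).trans (le_max_right _ _)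

section Uniqueness

variable {E : Type*} [NormedAddCommGroup E] [NormedSpace ℝ E] {F : ℝ → E → E} {f g : ℝ → E}
  {a b : ℝ}

lemma HasDerivWithinAt.Ici_of_Icc {f' : E} {t : ℝ} (ht : t ∈ Ico a b)
    (h : HasDerivWithinAt f f' (Icc a b) t) : HasDerivWithinAt f f' (Ici t) t :=
  h.mono_of_mem_nhdsWithin (Icc_mem_nhdsGE_of_mem ht)

lemma HasDerivWithinAt.Iic_of_Icc {f' : E} {t : ℝ} (ht : t ∈ Ioc a b)
    (h : HasDerivWithinAt f f' (Icc a b) t) : HasDerivWithinAt f f' (Iic t) t :=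
  h.mono_of_mem_nhdsWithin (Icc_mem_nhdsLE_of_mem ht)

variable (hF : ∀ M, ∃ K, ∀ t ∈ Icc a b, LipschitzOnWith K (F t) (closedBall 0 M))
  (hf : ∀ t ∈ Icc a b, HasDerivWithinAt f (F t (f t)) (Icc a b) t)
  (hg : ∀ t ∈ Icc a b, HasDerivWithinAt g (F t (g t)) (Icc a b) t)
include hF hf hg

theorem ODE_solution_eqOn_Icc_of_eq_left (ha : f a = g a) : EqOn f g (Icc a b) := by
  have hfc : ContinuousOn f (Icc a b) := fun t ht => (hf t ht).continuousWithinAt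
  have hgc : ContinuousOn g (Icc a b) := fun t ht => (hg t ht).continuousWithinAt
  obtain ⟨M, hM⟩ := isCompact_Icc.exists_mem_closedBall_of_continuousOn hfc hgc
  obtain ⟨K, hK⟩ := hF M
  exact ODE_solution_unique_of_mem_Icc_right (fun t ht => hK t (Ico_subset_Icc_self ht))
    hfc (fun t ht => (hf t (Ico_subset_Icc_self ht)).Ici_of_Icc ht)
    (fun t ht => (hM t (Ico_subset_Icc_self ht)).1)
    hgc (fun t ht => (hg t (Ico_subset_Icc_self ht)).Ici_of_Icc ht)
    (fun t ht => (hM t (Ico_subset_Icc_self ht)).2) ha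

theorem ODE_solution_eqOn_Icc_of_eq_right (hb : f b = g b) : EqOn f g (Icc a b) := by
  have hfc : ContinuousOn f (Icc a b) := fun t ht => (hf t ht).continuousWithinAt
  have hgc : ContinuousOn g (Icc a b) := fun t ht => (hg t ht).continuousWithinAt
  obtain ⟨M, hM⟩ := isCompact_Icc.exists_mem_closedBall_of_continuousOn hfc hgc
  obtain ⟨K, hK⟩ := hF M
  exact ODE_solution_unique_of_mem_Icc_left (fun t ht => hK t (Ioc_subset_Icc_self ht))
    hfc (fun t ht => (hf t (Ioc_subset_Icc_self ht)).Iic_of_Icc ht)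
    (fun t ht => (hM t (Ioc_subset_Icc_self ht)).1)
    hgc (fun t ht => (hg t (Ioc_subset_Icc_self ht)).Iic_of_Icc ht)
    (fun t ht => (hM t (Ioc_subset_Icc_self ht)).2) hb

end Uniqueness

lemma lipschitzOnWith_const_mul_sq_closedBall (c M : ℝ) :
    LipschitzOnWith (2 * |c| * M).toNNReal (fun x : ℝ => c * x ^ 2) (closedBall 0 M) := by
  refine LipschitzOnWith.of_dist_le_mul fun x hx y hy => ?_
  rw [mem_closedBall_zero_iff, Real.norm_eq_abs] at hx hy
  rw [Real.coe_toNNReal _ (by positivity [(abs_nonneg x).trans hx]), Real.dist_eq, Real.dist_eq]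
  calc |c * x ^ 2 - c * y ^ 2| = |c| * |x + y| * |x - y| := by
        rw [← abs_mul, ← abs_mul]; ring_nf
    _ ≤ |c| * (2 * M) * |x - y| := by gcongr; exact (abs_add_le x y).trans (by linarith)
    _ = 2 * |c| * M * |x - y| := by ring

lemma exists_lipschitzWith_mul_left_of_continuousOn {s : Set ℝ} (hs : IsCompact s) {c : ℝ → ℝ}
    (hc : ContinuousOn c s) : ∃ K, ∀ t ∈ s, LipschitzWith K (fun x => c t * x) := by
  obtain ⟨C, hC⟩ := hs.exists_bound_of_continuousOn hc
  refine ⟨C.toNNReal, fun t ht => LipschitzWith.of_dist_le_mul fun x y => ?_⟩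
  rw [Real.dist_eq, Real.dist_eq, ← mul_sub, abs_mul]
  exact mul_le_mul_of_nonneg_right ((hC t ht).trans (Real.le_coe_toNNReal C)) (abs_nonneg _)

theorem exists_hasDerivWithinAt_Icc_eq {E : Type*} [NormedAddCommGroup E] [NormedSpace ℝ E]
    [CompleteSpace E] {a b : ℝ} (hab : a ≤ b) {g : ℝ → E} (hg : ContinuousOn g (Icc a b))
    (t₀ : ℝ) (y₀ : E) :
    ∃ f : ℝ → E, f t₀ = y₀ ∧ ∀ t ∈ Icc a b, HasDerivWithinAt f (g t) (Icc a b) t := by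
  have hg' : Continuous fun s => g (projIcc a b hab s) :=
    hg.comp_continuous (continuous_subtype_val.comp continuous_projIcc)
      fun s => (projIcc a b hab s).2
  refine ⟨fun t => y₀ + ∫ s in t₀..t, g (projIcc a b hab s), by simp, fun t ht => ?_⟩
  have h := ((hg'.integral_hasStrictDerivAt t₀ t).hasDerivAt.const_add y₀).hasDerivWithinAt
    (s := Icc a b)
  rwa [projIcc_of_mem hab ht] at h

noncomputable section ExplicitSolution

variable (k lam T : ℝ)

def mfDenom (t : ℝ) : ℝ := 1 + lam * k * (T - t)

def mfEta (t : ℝ) : ℝ := lam / mfDenom k lam T t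

/-- Writing `v = D² w` with `D = mfDenom` turns `v' = σ² - 2 k η v` into `w' = σ² / D²`, and
`∫₀ᵗ D⁻² = t / (D 0 * D t)` because `D` is affine. -/
def mfVar (σ ν t : ℝ) : ℝ :=
  ν ^ 2 * (mfDenom k lam T t / mfDenom k lam T 0) ^ 2
    + σ ^ 2 * t * (mfDenom k lam T t / mfDenom k lam T 0)

variable {k lam T}

lemma mfDenom_pos (hk : 0 ≤ k) (hlam : 0 ≤ lam) {t : ℝ} (ht : t ≤ T) : 0 < mfDenom k lam T t := by
  have : 0 ≤ lam * k * (T - t) := mul_nonneg (mul_nonneg hlam hk) (sub_nonneg.2 ht)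
  unfold mfDenom
  linarith

lemma hasDerivAt_mfDenom (t : ℝ) : HasDerivAt (mfDenom k lam T) (-(lam * k)) t := by
  unfold mfDenom
  simpa using ((hasDerivAt_id t).const_sub T).const_mul (lam * k) |>.const_add 1

lemma mfEta_self : mfEta k lam T T = lam := by
  simp [mfEta, mfDenom]

lemma hasDerivAt_mfEta {t : ℝ} (ht : mfDenom k lam T t ≠ 0) :
    HasDerivAt (mfEta k lam T) (k * mfEta k lam T t ^ 2) t := by
  refine ((hasDerivAt_const t lam).div (hasDerivAt_mfDenom t) ht).congr_deriv ?_
  simp only [mfEta]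
  field_simp
  ring

lemma mfVar_zero (σ ν : ℝ) (h₀ : mfDenom k lam T 0 ≠ 0) : mfVar k lam T σ ν 0 = ν ^ 2 := by
  simp [mfVar, h₀]

lemma hasDerivAt_mfVar (σ ν : ℝ) {t : ℝ} (h₀ : mfDenom k lam T 0 ≠ 0)
    (ht : mfDenom k lam T t ≠ 0) :
    HasDerivAt (mfVar k lam T σ ν) (σ ^ 2 - 2 * k * mfEta k lam T t * mfVar k lam T σ ν t) t := by
  have hρ := (hasDerivAt_mfDenom (k := k) (lam := lam) (T := T) t).div_const (mfDenom k lam T 0)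
  refine (((hρ.pow 2).const_mul (ν ^ 2)).add (((hasDerivAt_id t).const_mul (σ ^ 2)).mul hρ))
    |>.congr_deriv ?_
  have hD : mfDenom k lam T t = mfDenom k lam T 0 - lam * k * t := by simp only [mfDenom]; ring
  simp only [mfVar, mfEta, id, Nat.cast_ofNat, Nat.reduceSub, pow_one]
  rw [hD] at ht ⊢
  generalize mfDenom k lam T 0 = D₀ at h₀ ht ⊢
  field_simp
  ring

lemma mfVar_pos (hk : 0 ≤ k) (hlam : 0 ≤ lam) (σ : ℝ) {ν : ℝ} (hν : ν ≠ 0) {t : ℝ}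
    (ht : t ∈ Icc 0 T) : 0 < mfVar k lam T σ ν t := by
  have h₀ := mfDenom_pos hk hlam (ht.1.trans ht.2)
  have h := mfDenom_pos hk hlam ht.2
  have ht₀ := ht.1
  unfold mfVar
  positivity

end ExplicitSolution

theorem exists_mfConsistencySol {T b r lam σ ν m₀ Xa : ℝ} (hT : 0 ≤ T) (hr : 0 ≤ r)
    (hlam : 0 ≤ lam) (hν : ν ≠ 0) {γ : ℝ → ℝ} (hγ : ContinuousOn γ (Icc 0 T)) :
    ∃ η p v φ q : ℝ → ℝ, MFConsistencySol T b r lam σ ν m₀ Xa γ η p v φ q := by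
  have hk : 0 ≤ b ^ 2 / r := by positivity
  have hD (t : ℝ) (ht : t ∈ Icc 0 T) : mfDenom (b ^ 2 / r) lam T t ≠ 0 :=
    (mfDenom_pos hk hlam ht.2).ne'
  have hD₀ := hD 0 (left_mem_Icc.2 hT)
  set η := mfEta (b ^ 2 / r) lam T
  set v := mfVar (b ^ 2 / r) lam T σ ν
  have hη (t : ℝ) (ht : t ∈ Icc 0 T) := hasDerivAt_mfEta (hD t ht)
  have hv (t : ℝ) (ht : t ∈ Icc 0 T) := hasDerivAt_mfVar σ ν hD₀ (hD t ht)
  have hv_pos (t : ℝ) (ht : t ∈ Icc 0 T) := mfVar_pos hk hlam σ hν ht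
  have hη_cont : ContinuousOn η (Icc 0 T) := HasDerivAt.continuousOn hη
  have hsqrt_ne (t : ℝ) (ht : t ∈ Icc 0 T) : √(v t) ≠ 0 := (Real.sqrt_pos.2 (hv_pos t ht)).ne'
  have hsqrt_cont : ContinuousOn (fun t => √(v t)) (Icc 0 T) :=
    (HasDerivAt.continuousOn hv).sqrt
  obtain ⟨φ, hφT, hφ⟩ := exists_hasDerivWithinAt_Icc_eq hT
    (g := fun t => -(σ ^ 2 / 2) * (Xa / √(v t)) * -η t)
    (by fun_prop (disch := assumption)) T 0
  have hφ_cont : ContinuousOn φ (Icc 0 T) := fun t ht => (hφ t ht).continuousWithinAt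
  obtain ⟨q, hq0, hq⟩ := exists_hasDerivWithinAt_Icc_eq hT
    (g := fun t => γ t - b ^ 2 / r * φ t + σ ^ 2 / 2 * Xa / √(v t))
    (by fun_prop (disch := assumption)) 0 (m₀ + ν * Xa)
  exact ⟨η, fun t => -η t, v, φ, q, fun t ht => (hη t ht).hasDerivWithinAt, mfEta_self,
    fun t ht => ((hη t ht).neg.congr_deriv (by ring)).hasDerivWithinAt, by simp [η, mfEta_self],
    fun t ht => (hv t ht).hasDerivWithinAt, mfVar_zero σ ν hD₀, hv_pos, hφ, hφT, hq, hq0⟩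

theorem MFConsistencySol.eqOn {T b r lam σ ν m₀ Xa : ℝ} {γ η₁ p₁ v₁ φ₁ q₁ η₂ p₂ v₂ φ₂ q₂ : ℝ → ℝ}
    (h₁ : MFConsistencySol T b r lam σ ν m₀ Xa γ η₁ p₁ v₁ φ₁ q₁)
    (h₂ : MFConsistencySol T b r lam σ ν m₀ Xa γ η₂ p₂ v₂ φ₂ q₂) :
    EqOn η₁ η₂ (Icc 0 T) ∧ EqOn p₁ p₂ (Icc 0 T) ∧ EqOn v₁ v₂ (Icc 0 T) ∧
      EqOn φ₁ φ₂ (Icc 0 T) ∧ EqOn q₁ q₂ (Icc 0 T) := by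
  obtain ⟨hη₁, hη₁T, hp₁, hp₁T, hv₁, hv₁0, -, hφ₁, hφ₁T, hq₁, hq₁0⟩ := h₁
  obtain ⟨hη₂, hη₂T, hp₂, hp₂T, hv₂, hv₂0, -, hφ₂, hφ₂T, hq₂, hq₂0⟩ := h₂
  have hconst {c : ℝ → ℝ} (M : ℝ) :
      ∃ K, ∀ t ∈ Icc 0 T, LipschitzOnWith K (fun _ : ℝ => c t) (closedBall 0 M) :=
    ⟨0, fun t _ => (LipschitzWith.const (c t)).lipschitzOnWith⟩
  obtain ⟨K, hK⟩ := exists_lipschitzWith_mul_left_of_continuousOn isCompact_Icc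
    (c := fun t => 2 * (b ^ 2 / r) * η₁ t) (continuousOn_const.mul
      fun t ht => (hη₁ t ht).continuousWithinAt)
  have hη : EqOn η₁ η₂ (Icc 0 T) := ODE_solution_eqOn_Icc_of_eq_right
    (F := fun _ x => b ^ 2 / r * x ^ 2)
    (fun M => ⟨_, fun _ _ => lipschitzOnWith_const_mul_sq_closedBall _ M⟩) hη₁ hη₂
    (hη₁T.trans hη₂T.symm)
  have hp : EqOn p₁ p₂ (Icc 0 T) := ODE_solution_eqOn_Icc_of_eq_right
    (F := fun t x => b ^ 2 / r * x ^ 2 + 2 * (b ^ 2 / r) * η₁ t * x)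
    (fun M => ⟨_, fun t ht =>
      (lipschitzOnWith_const_mul_sq_closedBall _ M).add (hK t ht).lipschitzOnWith⟩)
    hp₁ (fun t ht => hη ht ▸ hp₂ t ht) (hp₁T.trans hp₂T.symm)
  have hv : EqOn v₁ v₂ (Icc 0 T) := ODE_solution_eqOn_Icc_of_eq_left
    (F := fun t x => σ ^ 2 - 2 * (b ^ 2 / r) * η₁ t * x)
    (fun M => ⟨_, fun t ht => ((LipschitzWith.const _).sub (hK t ht)).lipschitzOnWith⟩)
    hv₁ (fun t ht => hη ht ▸ hv₂ t ht) (hv₁0.trans hv₂0.symm)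
  have hφ : EqOn φ₁ φ₂ (Icc 0 T) := ODE_solution_eqOn_Icc_of_eq_right
    (F := fun t _ => -(σ ^ 2 / 2) * (Xa / √(v₁ t)) * p₁ t) hconst
    hφ₁ (fun t ht => hv ht ▸ hp ht ▸ hφ₂ t ht) (hφ₁T.trans hφ₂T.symm)
  have hq : EqOn q₁ q₂ (Icc 0 T) := ODE_solution_eqOn_Icc_of_eq_left
    (F := fun t _ => γ t - b ^ 2 / r * φ₁ t + σ ^ 2 / 2 * Xa / √(v₁ t)) hconst
    hq₁ (fun t ht => hv ht ▸ hφ ht ▸ hq₂ t ht) (hq₁0.trans hq₂0.symm)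
  exact ⟨hη, hp, hv, hφ, hq⟩

theorem stmt_6_general (T b r lam σ ν m₀ Xa : ℝ) (hT : 0 < T) (hr : 0 < r)
    (hlam : 0 < lam) (hν : 0 < ν)
    (γ : ℝ → ℝ) (hγ : ContinuousOn γ (Icc (0:ℝ) T)) :
    (∃ η p v φ q : ℝ → ℝ, MFConsistencySol T b r lam σ ν m₀ Xa γ η p v φ q) ∧
    (∀ η₁ p₁ v₁ φ₁ q₁ η₂ p₂ v₂ φ₂ q₂ : ℝ → ℝ,
      MFConsistencySol T b r lam σ ν m₀ Xa γ η₁ p₁ v₁ φ₁ q₁ →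
      MFConsistencySol T b r lam σ ν m₀ Xa γ η₂ p₂ v₂ φ₂ q₂ →
      ∀ t ∈ Icc (0:ℝ) T,
        η₁ t = η₂ t ∧ p₁ t = p₂ t ∧ v₁ t = v₂ t ∧ φ₁ t = φ₂ t ∧ q₁ t = q₂ t) := by
  refine ⟨exists_mfConsistencySol hT.le hr.le hlam.le hν.ne' hγ,
    fun _ _ _ _ _ _ _ _ _ _ h₁ h₂ t ht => ?_⟩
  obtain ⟨hη, hp, hv, hφ, hq⟩ := h₁.eqOn h₂
  exact ⟨hη ht, hp ht, hv ht, hφ ht, hq ht⟩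

/-- existence and uniqueness of the solution of the decoupled mean-field
consistency system (fbode1)–(fbode5) on `[0,T]`. -/
theorem stmt_6 (T b r lam σ ν m₀ Xa : ℝ) (hT : 0 < T) (hb : 0 < b) (hr : 0 < r)
    (hlam : 0 < lam) (hσ : 0 < σ) (hν : 0 < ν)
    (γ : ℝ → ℝ) (hγ : ContinuousOn γ (Icc (0:ℝ) T)) :
    (∃ η p v φ q : ℝ → ℝ, MFConsistencySol T b r lam σ ν m₀ Xa γ η p v φ q) ∧
    (∀ η₁ p₁ v₁ φ₁ q₁ η₂ p₂ v₂ φ₂ q₂ : ℝ → ℝ,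
      MFConsistencySol T b r lam σ ν m₀ Xa γ η₁ p₁ v₁ φ₁ q₁ →
      MFConsistencySol T b r lam σ ν m₀ Xa γ η₂ p₂ v₂ φ₂ q₂ →
      ∀ t ∈ Icc (0:ℝ) T,
        η₁ t = η₂ t ∧ p₁ t = p₂ t ∧ v₁ t = v₂ t ∧ φ₁ t = φ₂ t ∧ q₁ t = q₂ t) :=
  stmt_6_general T b r lam σ ν m₀ Xa hT hr hlam hν γ hγ
end
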